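/- Let (G_n) be a sequence of finite connected vertex-transitive graphs with |V(G_n)| → ∞. If (G_n) has a percolation threshold, then (G_n) has the supercritical existence property: for every supercritical sequence of parameters (q_n), there exists α > 0 such that lim_{n→∞} ℙ^{G_n}_{q_n}( ∥K_1∥ ≥ α ) = 1. -/

import Mathlib

open Filter Topology

noncomputable section

/-- The subgraph of `G` whose open edges are given by the configuration `ω`. -/
def SimpleGraph.openGraph {V : Type} (G : SimpleGraph V) (ω : G.edgeSet → Bool) :
    SimpleGraph V where
  Adj u v := u ≠ v ∧ ∃ e : G.edgeSet, ω e = true ∧ u ∈ (e : Sym2 V) ∧ v ∈ (e : Sym2 V)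
  symm := ⟨fun _ _ ⟨hne, e, hw, hu, hv⟩ => ⟨hne.symm, e, hw, hv, hu⟩⟩
  loopless := ⟨fun _ ⟨hne, _⟩ => hne rfl⟩

/-- The density `∥K_v∥` of the cluster of the vertex `v` in the configuration `ω`. -/
def clusterDensity {V : Type} [Fintype V] (G : SimpleGraph V) (ω : G.edgeSet → Bool)
    (v : V) : ℝ :=
  (((G.openGraph ω).connectedComponentMk v).supp.ncard : ℝ) / (Fintype.card V : ℝ)

/-- The density `∥K_1∥` of the largest cluster in the configuration `ω`. -/
def maxClusterDensity {V : Type} [Fintype V] (G : SimpleGraph V) (ω : G.edgeSet → Bool) : ℝ :=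
  ⨆ v : V, clusterDensity G ω v

/-- The density `∥K_2∥` of the second largest cluster (zero if there is only one cluster). -/
def secondClusterDensity {V : Type} [Fintype V] (G : SimpleGraph V)
    (ω : G.edgeSet → Bool) : ℝ :=
  ⨆ u : V, ⨆ v : V, ⨆ _ : ¬ (G.openGraph ω).Reachable u v,
    min (clusterDensity G ω u) (clusterDensity G ω v)

/-- Clamp a parameter into `[0,1]` (the convention `ℙ_p := ℙ_1` for `p > 1`, `ℙ_p := ℙ_0` for
`p < 0`). -/
def pclamp (p : ℝ) : ℝ := max 0 (min 1 p)

/-- The probability of the configuration `ω` under Bernoulli bond percolation. -/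
def configWeight {V : Type} [Fintype V] [DecidableEq V] (G : SimpleGraph V)
    [DecidableRel G.Adj] (p : ℝ) (ω : G.edgeSet → Bool) : ℝ :=
  ∏ e : G.edgeSet, if ω e then pclamp p else 1 - pclamp p

/-- The probability `ℙ_p^G(A)` of an event `A` under Bernoulli bond percolation. -/
def percProb {V : Type} [Fintype V] [DecidableEq V] (G : SimpleGraph V) [DecidableRel G.Adj]
    (p : ℝ) (A : Set (G.edgeSet → Bool)) : ℝ :=
  ∑ ω : G.edgeSet → Bool, Set.indicator A (configWeight G p) ω

/-- The expectation `E_p^G[f]` under Bernoulli bond percolation. -/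
def percExp {V : Type} [Fintype V] [DecidableEq V] (G : SimpleGraph V) [DecidableRel G.Adj]
    (p : ℝ) (f : (G.edgeSet → Bool) → ℝ) : ℝ :=
  ∑ ω : G.edgeSet → Bool, configWeight G p ω * f ω

/-- A graph is vertex-transitive if its automorphism group acts transitively on vertices. -/
def VertexTransitive {V : Type} (G : SimpleGraph V) : Prop :=
  ∀ u v : V, ∃ φ : G ≃g G, φ u = v

/-- A finite graph, bundled with its vertex type. -/
structure FinGraph where
  V : Type
  [fintypeV : Fintype V]
  [decEqV : DecidableEq V]
  G : SimpleGraph V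
  [decAdj : DecidableRel G.Adj]

attribute [instance] FinGraph.fintypeV FinGraph.decEqV FinGraph.decAdj

/-- `(p_n)` is a percolation threshold for the sequence of finite graphs `(G_n)`. -/
def IsPercolationThreshold (H : ℕ → FinGraph) (p : ℕ → ℝ) : Prop :=
  ∀ ε : ℝ, 0 < ε →
    (∃ α : ℝ, 0 < α ∧ Tendsto (fun n => percProb (H n).G ((1 + ε) * p n)
        {ω | α ≤ maxClusterDensity (H n).G ω}) atTop (𝓝 1)) ∧
    (∀ α : ℝ, 0 < α → Tendsto (fun n => percProb (H n).G ((1 - ε) * p n)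
        {ω | α ≤ maxClusterDensity (H n).G ω}) atTop (𝓝 0))

/-- A sequence of finite graphs is dense:
`liminf |E(G_n)|/|V(G_n)|² > 0`. -/
def DenseSeq (H : ℕ → FinGraph) : Prop :=
  ∃ c : ℝ, 0 < c ∧ ∀ᶠ n in atTop,
    c ≤ ((H n).G.edgeFinset.card : ℝ) / (Fintype.card (H n).V : ℝ) ^ 2

/-- The sequence `(G_n)` is `m`-molecular. -/
def IsMMolecular (H : ℕ → FinGraph) (m : ℕ) : Prop :=
  DenseSeq H ∧ ∃ C : ℝ, ∀ n : ℕ, ∃ F : Set (Sym2 (H n).V),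
    F ⊆ (H n).G.edgeSet ∧
    Nat.card ((H n).G.deleteEdges F).ConnectedComponent = m ∧
    (∀ φ : (H n).G ≃g (H n).G, Sym2.map ⇑φ '' F = F) ∧
    (F.ncard : ℝ) ≤ C * (Fintype.card (H n).V : ℝ)

/-- The sequence `(G_n)` contains an `m`-molecular subsequence. -/
def HasMMolecularSubseq (H : ℕ → FinGraph) (m : ℕ) : Prop :=
  ∃ f : ℕ → ℕ, StrictMono f ∧ IsMMolecular (H ∘ f) m

end

noncomputable section

/-- A sequence of parameters `(q_n)` is supercritical for `(G_n)`. -/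
def IsSupercritical (H : ℕ → FinGraph) (q : ℕ → ℝ) : Prop :=
  ∃ ε : ℝ, 0 < ε ∧ ∃ N : ℕ, ∀ n, N ≤ n → q n < 1 →
    ε ≤ percProb (H n).G ((1 - ε) * q n) {ω | ε ≤ maxClusterDensity (H n).G ω}

/-- The supercritical uniqueness property. -/
def SupercriticalUniqueness (H : ℕ → FinGraph) : Prop :=
  ∀ q : ℕ → ℝ, IsSupercritical H q → ∀ α : ℝ, 0 < α →
    Tendsto (fun n => percProb (H n).G (q n)
      {ω | α ≤ secondClusterDensity (H n).G ω}) atTop (𝓝 0)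

/-- The supercritical existence property. -/
def SupercriticalExistence (H : ℕ → FinGraph) : Prop :=
  ∀ q : ℕ → ℝ, IsSupercritical H q → ∃ α : ℝ, 0 < α ∧
    Tendsto (fun n => percProb (H n).G (q n)
      {ω | α ≤ maxClusterDensity (H n).G ω}) atTop (𝓝 1)

end

/-!
Under the monotone coupling of Bernoulli variables, `ℙ_p` of an increasing event is nondecreasing
in `p`. If `(q_n)` is supercritical with constant `ε`, then eventually `q_n ≥ (1 + ε/2) p_n`
(after clamping to `[0, 1]`): otherwise `(1 - ε) q_n ≤ (1 - ε/2) p_n`, and for large such `n`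
the subcritical half of the threshold gives `ℙ_{(1-ε) q_n}(∥K_1∥ ≥ ε) < ε`. The supercritical
half of the threshold at `(1 + ε/2) p_n` then transfers to `q_n`.
-/

lemma pclamp_nonneg (p : ℝ) : 0 ≤ pclamp p := le_max_left _ _

lemma pclamp_le_one (p : ℝ) : pclamp p ≤ 1 := max_le zero_le_one (min_le_left _ _)

lemma pclamp_mono : Monotone pclamp := fun _ _ h => max_le_max le_rfl (min_le_min le_rfl h)

lemma le_pclamp {p : ℝ} (h : p ≤ 1) : p ≤ pclamp p := by
  rw [pclamp, min_eq_right h]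
  exact le_max_right _ _

lemma pclamp_le_self {p : ℝ} (h : 0 < pclamp p) : pclamp p ≤ p := by
  rcases le_or_gt (min 1 p) 0 with h' | h'
  · rw [pclamp, max_eq_left h'] at h
    exact absurd h (lt_irrefl 0)
  · rw [pclamp, max_eq_right h'.le]
    exact min_le_right _ _

lemma lt_one_of_pclamp_lt {p q : ℝ} (h : pclamp q < pclamp p) : q < 1 := by
  by_contra! hq
  have : pclamp q = 1 := by rw [pclamp, min_eq_left hq, max_eq_right zero_le_one]
  exact (pclamp_le_one p).not_gt (this ▸ h)

lemma pclamp_le_of_pclamp_lt {ε p q : ℝ} (hε₀ : 0 ≤ ε) (hε₁ : ε ≤ 1)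
    (h : pclamp q < pclamp ((1 + ε / 2) * p)) :
    pclamp ((1 - ε) * q) ≤ pclamp ((1 - ε / 2) * p) := by
  have hx : pclamp ((1 + ε / 2) * p) ≤ (1 + ε / 2) * p :=
    pclamp_le_self ((pclamp_nonneg q).trans_lt h)
  have hq : q < (1 + ε / 2) * p := (le_pclamp (lt_one_of_pclamp_lt h).le).trans_lt (h.trans_le hx)
  have hp : 0 < p := by nlinarith [pclamp_nonneg q]
  refine pclamp_mono ?_
  calc (1 - ε) * q ≤ (1 - ε) * ((1 + ε / 2) * p) := by gcongr
    _ = (1 - ε / 2) * p - ε ^ 2 / 2 * p := by ring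
    _ ≤ (1 - ε / 2) * p := by linarith [mul_nonneg (sq_nonneg ε) hp.le]

section Coupling

variable {ι : Type} [Fintype ι] {r r' : ℝ}

def bernoulliWeight (r : ℝ) (ω : ι → Bool) : ℝ :=
  ∏ i, if ω i then r else 1 - r

/-- The joint law of `(𝟙[U < r], 𝟙[U < r'])` for `U` uniform on `[0, 1]` and `r ≤ r'`. -/
def bernoulliCoupling (r r' : ℝ) (a b : Bool) : ℝ :=
  if a then (if b then r else 0) else (if b then r' - r else 1 - r')

lemma bernoulliWeight_nonneg (h₀ : 0 ≤ r) (h₁ : r ≤ 1) (ω : ι → Bool) :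
    0 ≤ bernoulliWeight r ω :=
  Finset.prod_nonneg fun i _ => by cases ω i <;> simp <;> linarith

lemma prod_bernoulliCoupling_nonneg (h₀ : 0 ≤ r) (hr : r ≤ r') (h₁ : r' ≤ 1)
    (ω ω' : ι → Bool) : 0 ≤ ∏ i, bernoulliCoupling r r' (ω i) (ω' i) :=
  Finset.prod_nonneg fun i _ => by
    cases ω i <;> cases ω' i <;> simp [bernoulliCoupling] <;> linarith

lemma prod_bernoulliCoupling_eq_zero_of_not_le {ω ω' : ι → Bool} (h : ¬ ω ≤ ω') :
    ∏ i, bernoulliCoupling r r' (ω i) (ω' i) = 0 := by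
  obtain ⟨i, hi⟩ := not_forall.mp h
  refine Finset.prod_eq_zero (Finset.mem_univ i) ?_
  revert hi
  cases ω i <;> cases ω' i <;> simp [bernoulliCoupling]

lemma indicator_prod_bernoulliCoupling_le (h₀ : 0 ≤ r) (hr : r ≤ r') (h₁ : r' ≤ 1)
    {A : Set (ι → Bool)} (hA : IsUpperSet A) (ω ω' : ι → Bool) :
    A.indicator (fun ω => ∏ i, bernoulliCoupling r r' (ω i) (ω' i)) ω ≤
      A.indicator (fun ω' => ∏ i, bernoulliCoupling r r' (ω i) (ω' i)) ω' := by
  have hJ := prod_bernoulliCoupling_nonneg (ι := ι) h₀ hr h₁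
  by_cases hω : ω ∈ A
  · by_cases hle : ω ≤ ω'
    · simp [hω, hA hle hω]
    · rw [Set.indicator_of_mem hω, prod_bernoulliCoupling_eq_zero_of_not_le hle]
      exact Set.indicator_nonneg (fun _ _ => hJ _ _) _
  · rw [Set.indicator_of_notMem hω]
    exact Set.indicator_nonneg (fun _ _ => hJ _ _) _

variable [DecidableEq ι]

lemma sum_bernoulliWeight (r : ℝ) : ∑ ω : ι → Bool, bernoulliWeight r ω = 1 := by
  simp only [bernoulliWeight]
  rw [← Fintype.prod_sum (ι := ι) fun _ (b : Bool) => if b then r else 1 - r]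
  simp

lemma bernoulliWeight_eq_sum_left (ω : ι → Bool) :
    bernoulliWeight r ω = ∑ ω' : ι → Bool, ∏ i, bernoulliCoupling r r' (ω i) (ω' i) := by
  rw [← Fintype.prod_sum fun i b => bernoulliCoupling r r' (ω i) b]
  refine Finset.prod_congr rfl fun i _ => ?_
  cases ω i <;> simp [bernoulliCoupling]

lemma bernoulliWeight_eq_sum_right (ω' : ι → Bool) :
    bernoulliWeight r' ω' = ∑ ω : ι → Bool, ∏ i, bernoulliCoupling r r' (ω i) (ω' i) := by
  rw [← Fintype.prod_sum fun i a => bernoulliCoupling r r' a (ω' i)]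
  refine Finset.prod_congr rfl fun i _ => ?_
  cases ω' i <;> simp [bernoulliCoupling]

lemma sum_indicator_bernoulliWeight_mono (h₀ : 0 ≤ r) (hr : r ≤ r') (h₁ : r' ≤ 1)
    {A : Set (ι → Bool)} (hA : IsUpperSet A) :
    ∑ ω, A.indicator (bernoulliWeight r) ω ≤ ∑ ω, A.indicator (bernoulliWeight r') ω :=
  calc ∑ ω, A.indicator (bernoulliWeight r) ω
      = ∑ ω, ∑ ω', A.indicator (fun ω => ∏ i, bernoulliCoupling r r' (ω i) (ω' i)) ω :=
        Finset.sum_congr rfl fun ω _ => by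
          by_cases hω : ω ∈ A <;> simp [hω, bernoulliWeight_eq_sum_left (r' := r') ω]
    _ ≤ ∑ ω, ∑ ω', A.indicator (fun ω' => ∏ i, bernoulliCoupling r r' (ω i) (ω' i)) ω' :=
        Finset.sum_le_sum fun ω _ => Finset.sum_le_sum fun ω' _ =>
          indicator_prod_bernoulliCoupling_le h₀ hr h₁ hA ω ω'
    _ = ∑ ω', A.indicator (bernoulliWeight r') ω' := by
        rw [Finset.sum_comm]
        exact Finset.sum_congr rfl fun ω' _ => by
          by_cases hω' : ω' ∈ A <;> simp [hω', bernoulliWeight_eq_sum_right (r := r) ω']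

end Coupling

section Percolation

variable {V : Type} (G : SimpleGraph V)

lemma openGraph_mono : Monotone G.openGraph := fun _ _ h _ _ ⟨hne, e, he, hu, hv⟩ =>
  ⟨hne, e, Bool.eq_false_imp_eq_true.mp fun _ => h e he, hu, hv⟩

variable [Fintype V]

lemma clusterDensity_mono (v : V) : Monotone fun ω => clusterDensity G ω v := by
  intro ω ω' h
  have hsub : ((G.openGraph ω).connectedComponentMk v).supp ⊆
      ((G.openGraph ω').connectedComponentMk v).supp := fun x hx =>
    SimpleGraph.ConnectedComponent.eq.mpr
      ((SimpleGraph.ConnectedComponent.eq.mp hx).mono (openGraph_mono G h))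
  exact div_le_div_of_nonneg_right (by exact_mod_cast Set.ncard_le_ncard hsub)
    (Nat.cast_nonneg _)

lemma maxClusterDensity_mono : Monotone (maxClusterDensity G) := by
  intro ω ω' h
  cases isEmpty_or_nonempty V
  · simp [maxClusterDensity]
  · exact ciSup_mono (Finite.bddAbove_range _) fun v => clusterDensity_mono G v h

lemma isUpperSet_le_maxClusterDensity (α : ℝ) :
    IsUpperSet {ω | α ≤ maxClusterDensity G ω} :=
  isUpperSet_setOfPred.mpr fun _ _ h hω => hω.trans (maxClusterDensity_mono G h)

variable [DecidableEq V] [DecidableRel G.Adj]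

lemma configWeight_eq_bernoulliWeight (p : ℝ) :
    configWeight G p = bernoulliWeight (pclamp p) := rfl

lemma percProb_le_one (p : ℝ) (A : Set (G.edgeSet → Bool)) : percProb G p A ≤ 1 := by
  rw [← sum_bernoulliWeight (ι := G.edgeSet) (pclamp p), percProb, configWeight_eq_bernoulliWeight]
  exact Finset.sum_le_sum fun ω _ => Set.indicator_le_self'
    (fun ω _ => bernoulliWeight_nonneg (pclamp_nonneg p) (pclamp_le_one p) ω) ω

lemma percProb_mono_of_isUpperSet {p p' : ℝ} (h : pclamp p ≤ pclamp p')
    {A : Set (G.edgeSet → Bool)} (hA : IsUpperSet A) : percProb G p A ≤ percProb G p' A :=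
  sum_indicator_bernoulliWeight_mono (pclamp_nonneg p) h (pclamp_le_one p') hA

end Percolation

lemma IsPercolationThreshold.eventually_pclamp_le_of_isSupercritical
    {H : ℕ → FinGraph} {p q : ℕ → ℝ}
    (hp : IsPercolationThreshold H p) (hq : IsSupercritical H q) :
    ∃ δ > 0, ∀ᶠ n in atTop, pclamp ((1 + δ) * p n) ≤ pclamp (q n) := by
  obtain ⟨ε, hε, N, hN⟩ := hq
  refine ⟨ε / 2, by positivity, ?_⟩
  have hsub := ((hp (ε / 2) (by positivity)).2 ε hε).eventually (gt_mem_nhds hε)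
  filter_upwards [eventually_ge_atTop N, hsub] with n hn hsmall
  by_contra! hlt
  have hlarge := hN n hn (lt_one_of_pclamp_lt hlt)
  have hε₁ : ε ≤ 1 := hlarge.trans (percProb_le_one _ _ _)
  have := percProb_mono_of_isUpperSet (H n).G (pclamp_le_of_pclamp_lt hε.le hε₁ hlt)
    (isUpperSet_le_maxClusterDensity (H n).G ε)
  linarith

theorem supercritical_existence_of_threshold_general
    (H : ℕ → FinGraph)
    (hthr : ∃ p : ℕ → ℝ, IsPercolationThreshold H p) :
    SupercriticalExistence H := by
  obtain ⟨p, hp⟩ := hthr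
  intro q hq
  obtain ⟨δ, hδ, hpq⟩ := hp.eventually_pclamp_le_of_isSupercritical hq
  obtain ⟨α, hα, hsup⟩ := (hp δ hδ).1
  refine ⟨α, hα, tendsto_of_tendsto_of_tendsto_of_le_of_le' hsup tendsto_const_nhds ?_
    (Eventually.of_forall fun n => percProb_le_one _ _ _)⟩
  filter_upwards [hpq] with n hn
  exact percProb_mono_of_isUpperSet (H n).G hn (isUpperSet_le_maxClusterDensity (H n).G α)

/-- If a sequence of finite connected vertex-transitive graphs with volume
tending to infinity has a percolation threshold, then it has the supercritical existence
property. -/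
theorem supercritical_existence_of_threshold
    (H : ℕ → FinGraph)
    (hconn : ∀ n, (H n).G.Connected)
    (htrans : ∀ n, VertexTransitive (H n).G)
    (hvol : Tendsto (fun n => Fintype.card (H n).V) atTop atTop)
    (hthr : ∃ p : ℕ → ℝ, IsPercolationThreshold H p) :
    SupercriticalExistence H :=
  supercritical_existence_of_threshold_general H hthr
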